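/- arXiv:2103.03053 — 8 statements merged into one kernel-verified Lean document; each statement's English description precedes it below -/
import Mathlib

section
/- If a connected finite simple graph G is a minimal (2,2)-dominated graph, then: (i) the minimum degree of G is at least 2; (ii) G is bipartite; and (iii) every edge of G is incident with a vertex of degree 2 in G. -/
/-- The degree of a vertex, as the cardinality of its neighbor set. -/
noncomputable def deg {V : Type*} [Fintype V] (G : SimpleGraph V) (v : V) : ℕ :=
  (G.neighborSet v).ncard

/-- `D` is a `k`-dominating set of `G`: every vertex outside `D`
has at least `k` neighbors in `D`. -/
def KDomSet {V : Type*} [Fintype V] (G : SimpleGraph V) (k : ℕ) (D : Set V) : Prop :=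
  ∀ v ∉ D, k ≤ (G.neighborSet v ∩ D).ncard

/-- `(D₁, D₂)` is a `(k,ℓ)`-pair in `G`: `D₁` and `D₂` are disjoint proper subsets of the
vertex set, `D₁` is `k`-dominating and `D₂` is `ℓ`-dominating. -/
def KLPair {V : Type*} [Fintype V] (G : SimpleGraph V) (k ℓ : ℕ) (D₁ D₂ : Set V) : Prop :=
  Disjoint D₁ D₂ ∧ D₁ ≠ Set.univ ∧ D₂ ≠ Set.univ ∧ KDomSet G k D₁ ∧ KDomSet G ℓ D₂

/-- `G` is a `(k,ℓ)`-dominated graph: it contains a `(k,ℓ)`-pair. -/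
def KLDominated {V : Type*} [Fintype V] (G : SimpleGraph V) (k ℓ : ℕ) : Prop :=
  ∃ D₁ D₂ : Set V, KLPair G k ℓ D₁ D₂

/-- `G` is bipartite with partite sets `A` and `B`. -/
def BipartiteWith {V : Type*} (G : SimpleGraph V) (A B : Set V) : Prop :=
  A ∪ B = Set.univ ∧ A ∩ B = ∅ ∧
    ∀ ⦃u v⦄, G.Adj u v → (u ∈ A ∧ v ∈ B) ∨ (u ∈ B ∧ v ∈ A)

/-- `G` is bipartite. -/
def IsBipartite {V : Type*} (G : SimpleGraph V) : Prop :=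
  ∃ A B : Set V, BipartiteWith G A B

/-- A connected graph `G` is a minimal `(2,2)`-dominated graph if `G` is `(2,2)`-dominated and
no proper spanning subgraph of `G` is `(2,2)`-dominated. -/
def Minimal22 {V : Type*} [Fintype V] (G : SimpleGraph V) : Prop :=
  G.Connected ∧ KLDominated G 2 2 ∧ ∀ H : SimpleGraph V, H < G → ¬ KLDominated H 2 2

/-- A connected minimal (2,2)-dominated graph has minimum degree at least 2, is bipartite,
and every edge is incident with a vertex of degree 2. -/
theorem stmt_5 {V : Type*} [Fintype V] (G : SimpleGraph V) (h : Minimal22 G) :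
    (∀ v : V, 2 ≤ deg G v) ∧ IsBipartite G ∧
      (∀ u v : V, G.Adj u v → deg G u = 2 ∨ deg G v = 2) := by
  obtain ⟨hconn, ⟨D₁, D₂, hdisj, h1u, h2u, hk1, hk2⟩, hmin⟩ := h
  have hne : Nonempty V := hconn.nonempty
  -- replace D₁ by the complement of D₂
  set A : Set V := D₂ᶜ with hA
  set B : Set V := D₂ with hB
  have hBne : B.Nonempty := by
    by_contra hB0
    rw [Set.not_nonempty_iff_eq_empty] at hB0
    obtain ⟨v⟩ := hne
    have hv : v ∉ B := by rw [hB0]; exact Set.notMem_empty v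
    have := hk2 v hv
    rw [hB0] at this
    simp at this
  have hAB : A ∪ B = Set.univ := Set.compl_union_self _
  have hABi : A ∩ B = ∅ := by rw [hA, hB]; exact Set.compl_inter_self _
  have hD1A : D₁ ⊆ A := fun x hx hxB => hdisj.ne_of_mem hx hxB rfl
  have hkA : KDomSet G 2 A := by
    intro v hv
    have hvB : v ∈ D₂ := not_not.mp hv
    have hvD1 : v ∉ D₁ := fun h' => hdisj.ne_of_mem h' hvB rfl
    calc 2 ≤ (G.neighborSet v ∩ D₁).ncard := hk1 v hvD1
      _ ≤ (G.neighborSet v ∩ A).ncard :=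
        Set.ncard_le_ncard (Set.inter_subset_inter_right _ hD1A) (Set.toFinite _)
  have hkB : KDomSet G 2 B := hk2
  have hAu : A ≠ Set.univ := by
    obtain ⟨b, hb⟩ := hBne
    intro hAeq
    exact (hAeq ▸ Set.mem_univ b : b ∈ A) hb
  have hdisjAB : Disjoint A B := disjoint_compl_left
  -- minimum degree at least 2
  have hdeg : ∀ v : V, 2 ≤ deg G v := by
    intro v
    by_cases hv : v ∈ B
    · have hvA : v ∉ A := fun hA' => hA' hv
      calc 2 ≤ (G.neighborSet v ∩ A).ncard := hkA v hvA
        _ ≤ (G.neighborSet v).ncard :=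
          Set.ncard_le_ncard Set.inter_subset_left (Set.toFinite _)
    · calc 2 ≤ (G.neighborSet v ∩ B).ncard := hkB v hv
        _ ≤ (G.neighborSet v).ncard :=
          Set.ncard_le_ncard Set.inter_subset_left (Set.toFinite _)
  -- deleting an edge keeps domination counts, given the edge avoids the relevant pairs
  have hdel : ∀ u v w : V, ∀ D : Set V,
      (∀ b ∈ G.neighborSet w ∩ D, ¬ (s(w,b) = s(u,v))) →
      (G.neighborSet w ∩ D).ncard ≤ ((G.deleteEdges {s(u,v)}).neighborSet w ∩ D).ncard := by
    intro u v w D hcond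
    apply Set.ncard_le_ncard _ (Set.toFinite _)
    rintro b ⟨hb, hbD⟩
    refine ⟨?_, hbD⟩
    rw [SimpleGraph.mem_neighborSet, SimpleGraph.deleteEdges_adj]
    exact ⟨hb, by simpa using hcond b ⟨hb, hbD⟩⟩
  have hlt : ∀ u v : V, G.Adj u v → G.deleteEdges {s(u,v)} < G := by
    intro u v huv
    refine lt_of_le_of_ne (SimpleGraph.deleteEdges_le _) ?_
    intro heq
    have h2 : (G.deleteEdges {s(u,v)}).Adj u v := by rw [heq]; exact huv
    rw [SimpleGraph.deleteEdges_adj] at h2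
    simp at h2
  -- every edge joins A and B
  have hedge : ∀ u v : V, G.Adj u v → (u ∈ A ∧ v ∈ B) ∨ (u ∈ B ∧ v ∈ A) := by
    intro u v huv
    by_cases hu : u ∈ B <;> by_cases hv : v ∈ B
    · exfalso
      apply hmin _ (hlt u v huv)
      refine ⟨A, B, hdisjAB, hAu, h2u, ?_, ?_⟩
      · intro w hw
        refine le_trans (hkA w hw) (hdel u v w A ?_)
        rintro b ⟨hb, hbA⟩ heq
        rw [Sym2.eq_iff] at heq
        rcases heq with ⟨_, rfl⟩ | ⟨_, rfl⟩
        · exact hbA hv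
        · exact hbA hu
      · intro w hw
        refine le_trans (hkB w hw) (hdel u v w B ?_)
        rintro b ⟨hb, hbB⟩ heq
        rw [Sym2.eq_iff] at heq
        rcases heq with ⟨rfl, _⟩ | ⟨rfl, _⟩
        · exact hw hu
        · exact hw hv
    · exact Or.inr ⟨hu, hv⟩
    · exact Or.inl ⟨hu, hv⟩
    · exfalso
      apply hmin _ (hlt u v huv)
      refine ⟨A, B, hdisjAB, hAu, h2u, ?_, ?_⟩
      · intro w hw
        have hwB : w ∈ D₂ := not_not.mp hw
        refine le_trans (hkA w hw) (hdel u v w A ?_)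
        rintro b ⟨hb, hbA⟩ heq
        rw [Sym2.eq_iff] at heq
        rcases heq with ⟨rfl, _⟩ | ⟨rfl, _⟩
        · exact hu hwB
        · exact hv hwB
      · intro w hw
        refine le_trans (hkB w hw) (hdel u v w B ?_)
        rintro b ⟨hb, hbB⟩ heq
        rw [Sym2.eq_iff] at heq
        rcases heq with ⟨_, rfl⟩ | ⟨_, rfl⟩
        · exact hv hbB
        · exact hu hbB
  -- key claim for part (iii) with u ∈ A, v ∈ B
  have key : ∀ u v : V, G.Adj u v → u ∈ A → v ∈ B → deg G u = 2 ∨ deg G v = 2 := by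
    intro u v huv huA hvB
    by_contra hc
    push_neg at hc
    obtain ⟨hu2, hv2⟩ := hc
    have hu3 : 2 < deg G u := lt_of_le_of_ne (hdeg u) (Ne.symm hu2)
    have hv3 : 2 < deg G v := lt_of_le_of_ne (hdeg v) (Ne.symm hv2)
    have hNu : G.neighborSet u ⊆ B := by
      intro b hb
      rcases hedge u b hb with ⟨_, hbB⟩ | ⟨huB, _⟩
      · exact hbB
      · exact (huA huB).elim
    have hNv : G.neighborSet v ⊆ A := by
      intro b hb
      rcases hedge v b hb with ⟨hvA, _⟩ | ⟨_, hbA⟩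
      · exact (hvA hvB).elim
      · exact hbA
    apply hmin _ (hlt u v huv)
    refine ⟨A, B, hdisjAB, hAu, h2u, ?_, ?_⟩
    · intro w hw
      by_cases hwv : w = v
      · subst hwv
        have h1 : (G.neighborSet w \ {u}) ⊆
            (G.deleteEdges {s(u,w)}).neighborSet w ∩ A := by
          rintro b ⟨hb, hbu⟩
          refine ⟨?_, hNv hb⟩
          rw [SimpleGraph.mem_neighborSet, SimpleGraph.deleteEdges_adj]
          refine ⟨hb, ?_⟩
          simp only [Set.mem_singleton_iff, Sym2.eq_iff]
          rintro (⟨h1', _⟩ | ⟨_, h2'⟩)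
          · exact G.ne_of_adj huv h1'.symm
          · exact hbu h2'
        have h2 : 2 ≤ (G.neighborSet w \ {u}).ncard := by
          have h3 := Set.ncard_diff_singleton_add_one
            (show u ∈ G.neighborSet w from huv.symm) (Set.toFinite _)
          have : 2 < (G.neighborSet w).ncard := hv3
          omega
        exact le_trans h2 (Set.ncard_le_ncard h1 (Set.toFinite _))
      · refine le_trans (hkA w hw) (hdel u v w A ?_)
        rintro b ⟨hb, hbA⟩ heq
        rw [Sym2.eq_iff] at heq
        rcases heq with ⟨h1', _⟩ | ⟨h1', _⟩
        · exact hw (h1' ▸ huA)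
        · exact hwv h1'
    · intro w hw
      by_cases hwu : w = u
      · subst hwu
        have h1 : (G.neighborSet w \ {v}) ⊆
            (G.deleteEdges {s(w,v)}).neighborSet w ∩ B := by
          rintro b ⟨hb, hbv⟩
          refine ⟨?_, hNu hb⟩
          rw [SimpleGraph.mem_neighborSet, SimpleGraph.deleteEdges_adj]
          refine ⟨hb, ?_⟩
          simp only [Set.mem_singleton_iff, Sym2.eq_iff]
          rintro (⟨_, h2'⟩ | ⟨h1', _⟩)
          · exact hbv h2'
          · exact G.ne_of_adj huv h1'
        have h2 : 2 ≤ (G.neighborSet w \ {v}).ncard := by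
          have h3 := Set.ncard_diff_singleton_add_one
            (show v ∈ G.neighborSet w from huv) (Set.toFinite _)
          have : 2 < (G.neighborSet w).ncard := hu3
          omega
        exact le_trans h2 (Set.ncard_le_ncard h1 (Set.toFinite _))
      · refine le_trans (hkB w hw) (hdel u v w B ?_)
        rintro b ⟨hb, hbB⟩ heq
        rw [Sym2.eq_iff] at heq
        rcases heq with ⟨h1', _⟩ | ⟨h1', _⟩
        · exact hwu h1'
        · exact hw (h1' ▸ hvB)
  refine ⟨hdeg, ⟨A, B, hAB, hABi, hedge⟩, ?_⟩
  intro u v huv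
  rcases hedge u v huv with ⟨hA', hB'⟩ | ⟨hB', hA'⟩
  · exact key u v huv hA' hB'
  · exact (key v u huv.symm hA' hB').symm
end

section
/- If a connected finite simple graph G satisfies: (i) the minimum degree of G is at least 2; (ii) G is bipartite; and (iii) every edge of G is incident with a vertex of degree 2 in G, then G is a minimal (2,2)-dominated graph. -/
/-!
The two colour classes `A`, `B` of `G` form a `(2,2)`-pair: a vertex outside `A` lies in `B`, so
all of its at least two neighbours lie in `A`, and symmetrically. Conversely, every vertex `w` of
a `(2,2)`-dominated graph has degree at least 2, since `w` lies outside one of the two disjoint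
dominating sets. Deleting an edge of `G` lowers the degree of its endpoint of degree 2 to 1, so no
proper spanning subgraph of `G` is `(2,2)`-dominated.
-/

namespace SimpleGraph

variable {V : Type*} {G H : SimpleGraph V}

theorem exists_adj_not_adj_of_lt (hHG : H < G) : ∃ x y, G.Adj x y ∧ ¬ H.Adj x y := by
  by_contra! h
  exact hHG.2 fun x y hxy => h x y hxy

variable [Fintype V]

theorem exists_adj_of_deg_pos {v : V} (h : 0 < deg G v) : ∃ w, G.Adj v w :=
  Set.nonempty_of_ncard_ne_zero h.ne'

theorem deg_lt_deg_of_le_of_not_adj (hHG : H ≤ G) {x y : V} (hxy : G.Adj x y)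
    (hnxy : ¬ H.Adj x y) : deg H x < deg G x :=
  Set.ncard_lt_ncard ⟨fun _ hz => hHG hz, fun hsub => hnxy (hsub hxy)⟩ (Set.toFinite _)

end SimpleGraph

section Domination

variable {V : Type*} [Fintype V] {G : SimpleGraph V}

theorem KDomSet.le_deg_of_notMem {k : ℕ} {D : Set V} (hD : KDomSet G k D) {v : V}
    (hv : v ∉ D) : k ≤ deg G v :=
  (hD v hv).trans (Set.ncard_le_ncard Set.inter_subset_left (Set.toFinite _))

theorem KLPair.min_le_deg {k ℓ : ℕ} {D₁ D₂ : Set V} (hD : KLPair G k ℓ D₁ D₂) (v : V) :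
    min k ℓ ≤ deg G v := by
  obtain ⟨hdisj, -, -, hD₁, hD₂⟩ := hD
  by_cases hv : v ∈ D₁
  · exact (min_le_right k ℓ).trans (hD₂.le_deg_of_notMem (Set.disjoint_left.mp hdisj hv))
  · exact (min_le_left k ℓ).trans (hD₁.le_deg_of_notMem hv)

theorem KLDominated.min_le_deg {k ℓ : ℕ} (hG : KLDominated G k ℓ) (v : V) :
    min k ℓ ≤ deg G v :=
  let ⟨_, _, hD⟩ := hG
  hD.min_le_deg v

end Domination

namespace BipartiteWith

variable {V : Type*} {G : SimpleGraph V} {A B : Set V}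

theorem symm (hAB : BipartiteWith G A B) : BipartiteWith G B A := by
  obtain ⟨hcover, hinter, hadj⟩ := hAB
  exact ⟨by rwa [Set.union_comm], by rwa [Set.inter_comm], fun u v huv => (hadj huv).symm⟩

theorem disjoint (hAB : BipartiteWith G A B) : Disjoint A B :=
  Set.disjoint_iff_inter_eq_empty.mpr hAB.2.1

theorem neighborSet_subset_of_notMem (hAB : BipartiteWith G A B) {v : V} (hv : v ∉ A) :
    G.neighborSet v ⊆ A := fun _ hu =>
  ((hAB.2.2 hu).resolve_left fun h => hv h.1).2

theorem left_ne_univ_of_adj (hAB : BipartiteWith G A B) {u v : V} (huv : G.Adj u v) :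
    A ≠ Set.univ := by
  intro hA
  rcases hAB.2.2 huv with ⟨-, hv⟩ | ⟨hu, -⟩
  · exact Set.disjoint_left.mp hAB.disjoint (hA ▸ Set.mem_univ v) hv
  · exact Set.disjoint_left.mp hAB.disjoint (hA ▸ Set.mem_univ u) hu

theorem kDomSet_left [Fintype V] (hAB : BipartiteWith G A B) {k : ℕ}
    (hδ : ∀ v, k ≤ deg G v) : KDomSet G k A := by
  intro v hv
  rw [Set.inter_eq_self_of_subset_left (hAB.neighborSet_subset_of_notMem hv)]
  exact hδ v

theorem klDominated [Fintype V] (hAB : BipartiteWith G A B) {u v : V} (huv : G.Adj u v)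
    {k ℓ : ℕ} (hk : ∀ w, k ≤ deg G w) (hℓ : ∀ w, ℓ ≤ deg G w) : KLDominated G k ℓ :=
  ⟨A, B, hAB.disjoint, hAB.left_ne_univ_of_adj huv, hAB.symm.left_ne_univ_of_adj huv,
    hAB.kDomSet_left hk, hAB.symm.kDomSet_left hℓ⟩

end BipartiteWith

/-- A connected graph with minimum degree at least 2 that is bipartite and in which every edge
is incident with a vertex of degree 2 is a minimal (2,2)-dominated graph. -/
theorem stmt_6 {V : Type*} [Fintype V] (G : SimpleGraph V) (hconn : G.Connected)
    (hδ : ∀ v : V, 2 ≤ deg G v) (hbip : IsBipartite G)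
    (hedge : ∀ u v : V, G.Adj u v → deg G u = 2 ∨ deg G v = 2) :
    Minimal22 G := by
  refine ⟨hconn, ?_, fun H hHG hH => ?_⟩
  · obtain ⟨A, B, hAB⟩ := hbip
    obtain ⟨v⟩ := hconn.nonempty
    obtain ⟨w, hvw⟩ := G.exists_adj_of_deg_pos (two_pos.trans_le (hδ v))
    exact hAB.klDominated hvw hδ hδ
  · obtain ⟨x, y, hxy, hnxy⟩ := SimpleGraph.exists_adj_not_adj_of_lt hHG
    have hx := SimpleGraph.deg_lt_deg_of_le_of_not_adj hHG.le hxy hnxy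
    have hy := SimpleGraph.deg_lt_deg_of_le_of_not_adj hHG.le hxy.symm (fun h => hnxy h.symm)
    have := hH.min_le_deg x
    have := hH.min_le_deg y
    rcases hedge x y hxy with h | h <;> omega
end

section
/- If G is a connected finite simple graph that is a minimal (2,2)-dominated graph and (D₁, D₂) is any (2,2)-pair in G, then D₁ ∪ D₂ = V(G), i.e., the sets D₁ and D₂ form a partition of the vertex set of G. -/
/-- In a connected minimal (2,2)-dominated graph, every (2,2)-pair partitions the vertex set. -/
theorem stmt_7 {V : Type*} [Fintype V] (G : SimpleGraph V) (h : Minimal22 G)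
    (D₁ D₂ : Set V) (hpair : KLPair G 2 2 D₁ D₂) : D₁ ∪ D₂ = Set.univ := by
  obtain ⟨hconn, hdom, hmin⟩ := h
  obtain ⟨hdisj, hu1, hu2, hd1, hd2⟩ := hpair
  by_contra hne
  obtain ⟨v, hv⟩ : ∃ v, v ∉ D₁ ∪ D₂ := by
    by_contra hc
    push_neg at hc
    exact hne (Set.eq_univ_of_forall hc)
  have hv1 : v ∉ D₁ := fun hh => hv (Or.inl hh)
  have hv2 : v ∉ D₂ := fun hh => hv (Or.inr hh)
  have h1 : 2 ≤ (G.neighborSet v ∩ D₁).ncard := hd1 v hv1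
  have hne1 : (G.neighborSet v ∩ D₁).Nonempty := by
    rw [← Set.ncard_pos (Set.toFinite _)]; omega
  obtain ⟨a, hadj, haD1⟩ := hne1
  have haD2 : a ∉ D₂ := fun hh => (hdisj.ne_of_mem haD1 hh) rfl
  set H := G.deleteEdges {s(v, a)} with hH
  have hHadj : ∀ u w, H.Adj u w ↔ G.Adj u w ∧ ¬(u = v ∧ w = a) ∧ ¬(u = a ∧ w = v) := by
    intro u w
    simp only [hH, SimpleGraph.deleteEdges_adj, Set.mem_singleton_iff, Sym2.eq_iff]
    tauto
  have hHlt : H < G := by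
    refine lt_of_le_of_ne (SimpleGraph.deleteEdges_le _) ?_
    intro heq
    have : H.Adj v a := heq ▸ hadj
    rw [hHadj] at this
    exact this.2.1 ⟨rfl, rfl⟩
  refine hmin H hHlt ⟨D₁ ∪ {v}, D₂, ?_, ?_, hu2, ?_, ?_⟩
  · -- disjoint
    simp only [Set.disjoint_union_left, Set.disjoint_singleton_left]
    exact ⟨hdisj, hv2⟩
  · -- D₁ ∪ {v} ≠ univ
    obtain ⟨b, hb⟩ : D₂.Nonempty := by
      rcases D₂.eq_empty_or_nonempty with he | hn
      · have := hd2 v hv2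
        simp [he] at this
      · exact hn
    intro heq
    have hb' : b ∈ D₁ ∪ {v} := heq ▸ Set.mem_univ b
    rcases hb' with hb' | hb'
    · exact (hdisj.ne_of_mem hb' hb) rfl
    · exact hv2 (hb' ▸ hb)
  · -- D₁ ∪ {v} is 2-dominating in H
    intro u hu
    have hu1 : u ∉ D₁ := fun hh => hu (Or.inl hh)
    have huv : u ≠ v := fun hh => hu (Or.inr hh)
    have hsub : G.neighborSet u ∩ D₁ ⊆ H.neighborSet u ∩ (D₁ ∪ {v}) := by
      rintro w ⟨hw1, hw2⟩
      refine ⟨?_, Or.inl hw2⟩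
      rw [SimpleGraph.mem_neighborSet, hHadj]
      exact ⟨hw1, fun hh => huv hh.1, fun hh => hu1 (hh.1 ▸ haD1)⟩
    calc 2 ≤ (G.neighborSet u ∩ D₁).ncard := hd1 u hu1
      _ ≤ (H.neighborSet u ∩ (D₁ ∪ {v})).ncard := Set.ncard_le_ncard hsub (Set.toFinite _)
  · -- D₂ is 2-dominating in H
    intro u hu2'
    have hsub : G.neighborSet u ∩ D₂ ⊆ H.neighborSet u ∩ D₂ := by
      rintro w ⟨hw1, hw2⟩
      refine ⟨?_, hw2⟩
      rw [SimpleGraph.mem_neighborSet, hHadj]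
      exact ⟨hw1, fun hh => haD2 (hh.2 ▸ hw2), fun hh => hv2 (hh.2 ▸ hw2)⟩
    calc 2 ≤ (G.neighborSet u ∩ D₂).ncard := hd2 u hu2'
      _ ≤ (H.neighborSet u ∩ D₂).ncard := Set.ncard_le_ncard hsub (Set.toFinite _)
end

section
/- If G is a connected finite simple graph that is a minimal (2,2)-dominated graph and (D₁, D₂) is any (2,2)-pair in G, then both D₁ and D₂ are independent sets of G (no edge of G joins two vertices of D₁, and no edge of G joins two vertices of D₂). -/
lemma nbr_eq {V : Type*} (G : SimpleGraph V) (u v w : V) (S : Set V)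
    (h1 : w ≠ u ∨ v ∉ S) (h2 : w ≠ v ∨ u ∉ S) :
    (G.deleteEdges {s(u,v)}).neighborSet w ∩ S = G.neighborSet w ∩ S := by
  ext x
  simp only [Set.mem_inter_iff, SimpleGraph.mem_neighborSet, SimpleGraph.deleteEdges_adj,
    Set.mem_singleton_iff, Sym2.eq, Sym2.rel_iff', Prod.mk.injEq, Prod.swap_prod_mk]
  constructor
  · rintro ⟨⟨ha, _⟩, hx⟩; exact ⟨ha, hx⟩
  · rintro ⟨ha, hx⟩
    refine ⟨⟨ha, ?_⟩, hx⟩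
    rintro (⟨rfl, rfl⟩ | ⟨rfl, rfl⟩)
    · rcases h1 with h | h <;> [exact h rfl; exact h hx]
    · rcases h2 with h | h <;> [exact h rfl; exact h hx]

lemma pair_del {V : Type*} [Fintype V] (G : SimpleGraph V) (D₁ D₂ : Set V)
    (hpair : KLPair G 2 2 D₁ D₂) (u v : V)
    (hcase : (u ∈ D₁ ∧ v ∈ D₁) ∨ (u ∈ D₂ ∧ v ∈ D₂)) :
    KLDominated (G.deleteEdges {s(u,v)}) 2 2 := by
  obtain ⟨hdisj, hne1, hne2, hd1, hd2⟩ := hpair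
  refine ⟨D₁, D₂, hdisj, hne1, hne2, ?_, ?_⟩
  · intro w hw
    rw [nbr_eq]
    · exact hd1 w hw
    · rcases hcase with ⟨_, hv⟩ | ⟨hu, _⟩
      · exact Or.inl (fun e => hw (e ▸ ‹u ∈ D₁›))
      · exact Or.inr (fun hv1 => hdisj.ne_of_mem hv1 ‹v ∈ D₂› rfl)
    · rcases hcase with ⟨hu, _⟩ | ⟨_, hv⟩
      · exact Or.inl (fun e => hw (e ▸ ‹v ∈ D₁›))
      · exact Or.inr (fun hu1 => hdisj.ne_of_mem hu1 ‹u ∈ D₂› rfl)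
  · intro w hw
    rw [nbr_eq]
    · exact hd2 w hw
    · rcases hcase with ⟨_, hv⟩ | ⟨hu, _⟩
      · exact Or.inr (fun hv2 => hdisj.ne_of_mem hv hv2 rfl)
      · exact Or.inl (fun e => hw (e ▸ hu))
    · rcases hcase with ⟨hu, _⟩ | ⟨_, hv⟩
      · exact Or.inr (fun hu2 => hdisj.ne_of_mem hu hu2 rfl)
      · exact Or.inl (fun e => hw (e ▸ hv))

lemma del_lt {V : Type*} {G : SimpleGraph V} {u v : V} (huv : G.Adj u v) :
    G.deleteEdges {s(u,v)} < G := by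
  refine lt_of_le_of_ne (SimpleGraph.deleteEdges_le _) ?_
  intro e
  have h2 : ¬ (G.deleteEdges {s(u,v)}).Adj u v := by simp
  rw [e] at h2
  exact h2 huv

/-- In a connected minimal (2,2)-dominated graph, both members of any (2,2)-pair are
independent sets. -/
theorem stmt_8 {V : Type*} [Fintype V] (G : SimpleGraph V) (h : Minimal22 G)
    (D₁ D₂ : Set V) (hpair : KLPair G 2 2 D₁ D₂) :
    (∀ u ∈ D₁, ∀ v ∈ D₁, ¬ G.Adj u v) ∧ (∀ u ∈ D₂, ∀ v ∈ D₂, ¬ G.Adj u v) := by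
  constructor
  · intro u hu v hv hadj
    exact h.2.2 _ (del_lt hadj) (pair_del G D₁ D₂ hpair u v (Or.inl ⟨hu, hv⟩))
  · intro u hu v hv hadj
    exact h.2.2 _ (del_lt hadj) (pair_del G D₁ D₂ hpair u v (Or.inr ⟨hu, hv⟩))
end

section
/- If G is a connected finite simple graph that is a minimal (2,2)-dominated graph, then no two vertices of degree at least 3 in G are adjacent; equivalently, the set of vertices of degree at least 3 is an independent set of G. -/
section Aux

variable {V : Type*} [Fintype V]

private lemma ncard_two_le_diff {T : Set V} {b : V} (h : 3 ≤ T.ncard) :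
    2 ≤ (T \ {b}).ncard := by
  have hsub : T ⊆ (T \ {b}) ∪ {b} := by
    intro x hx
    by_cases hxb : x = b
    · exact Or.inr (by simp [hxb])
    · exact Or.inl ⟨hx, hxb⟩
  have h1 : T.ncard ≤ (T \ {b}).ncard + 1 := by
    calc T.ncard ≤ ((T \ {b}) ∪ {b}).ncard := Set.ncard_le_ncard hsub (Set.toFinite _)
      _ ≤ (T \ {b}).ncard + ({b} : Set V).ncard := Set.ncard_union_le _ _
      _ = (T \ {b}).ncard + 1 := by simp
  omega

private lemma delete_lt {G : SimpleGraph V} {a b : V} (hab : G.Adj a b) :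
    G.deleteEdges {s(a,b)} < G := by
  refine lt_of_le_of_ne (SimpleGraph.deleteEdges_le _) ?_
  intro h
  have h2 : (G.deleteEdges {s(a,b)}).Adj a b := by rw [h]; exact hab
  simp [SimpleGraph.deleteEdges_adj] at h2

private lemma nbr_delete_self (G : SimpleGraph V) (a b : V) :
    (G.deleteEdges {s(a,b)}).neighborSet a = G.neighborSet a \ {b} := by
  ext y
  simp only [SimpleGraph.mem_neighborSet, SimpleGraph.deleteEdges_adj, Set.mem_singleton_iff,
    Sym2.congr_right, Set.mem_diff]

private lemma nbr_delete_eq (G : SimpleGraph V) {a b : V} (x : V)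
    (hxa : x ≠ a) (hxb : x ≠ b) :
    (G.deleteEdges {s(a,b)}).neighborSet x = G.neighborSet x := by
  ext y
  simp only [SimpleGraph.mem_neighborSet, SimpleGraph.deleteEdges_adj, Set.mem_singleton_iff,
    Sym2.eq_iff]
  constructor
  · rintro ⟨h, -⟩; exact h
  · intro h
    refine ⟨h, ?_⟩
    rintro (⟨rfl, rfl⟩ | ⟨rfl, rfl⟩) <;> simp_all

/-- If both endpoints of a removed edge are harmless for `D`-domination, the domination
survives edge removal. -/
private lemma dom_delete (G : SimpleGraph V) {a b : V} (D : Set V)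
    (hD : KDomSet G 2 D)
    (ha : a ∈ D ∨ b ∉ D ∨ 3 ≤ (G.neighborSet a ∩ D).ncard)
    (hb : b ∈ D ∨ a ∉ D ∨ 3 ≤ (G.neighborSet b ∩ D).ncard) :
    KDomSet (G.deleteEdges {s(a,b)}) 2 D := by
  have key : ∀ c d : V, (c ∈ D ∨ d ∉ D ∨ 3 ≤ (G.neighborSet c ∩ D).ncard) → c ∉ D →
      2 ≤ ((G.neighborSet c \ {d}) ∩ D).ncard := by
    intro c d hc hcD
    rcases hc with h | h | h
    · exact absurd h hcD
    · have : (G.neighborSet c \ {d}) ∩ D = G.neighborSet c ∩ D := by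
        ext y
        simp only [Set.mem_inter_iff, Set.mem_diff, Set.mem_singleton_iff]
        constructor
        · rintro ⟨⟨h1, -⟩, h2⟩; exact ⟨h1, h2⟩
        · rintro ⟨h1, h2⟩
          exact ⟨⟨h1, fun hy => h (hy ▸ h2)⟩, h2⟩
      rw [this]
      exact hD _ hcD
    · have heq : (G.neighborSet c \ {d}) ∩ D = (G.neighborSet c ∩ D) \ {d} := by
        ext y
        simp only [Set.mem_inter_iff, Set.mem_diff, Set.mem_singleton_iff]
        tauto
      rw [heq]
      exact ncard_two_le_diff h
  intro x hx
  by_cases hxa : x = a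
  · subst hxa
    rw [nbr_delete_self G x b]
    exact key x b ha hx
  · by_cases hxb : x = b
    · subst hxb
      have hswap : (G.deleteEdges {s(a,x)}) = (G.deleteEdges {s(x,a)}) := by
        rw [Sym2.eq_swap]
      rw [hswap, nbr_delete_self G x a]
      exact key x a hb hx
    · rw [nbr_delete_eq G x hxa hxb]
      exact hD _ hx

/-- There is no edge inside the first set of a pair in a minimal graph. -/
private lemma no_edge_first {G : SimpleGraph V}
    (hmin : ∀ H : SimpleGraph V, H < G → ¬ KLDominated H 2 2)
    {D₁ D₂ : Set V} (hp : KLPair G 2 2 D₁ D₂)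
    {a b : V} (hab : G.Adj a b) (ha : a ∈ D₁) (hb : b ∈ D₁) : False := by
  obtain ⟨hdisj, hne1, hne2, hd1, hd2⟩ := hp
  refine hmin (G.deleteEdges {s(a,b)}) (delete_lt hab) ⟨D₁, D₂, hdisj, hne1, hne2, ?_, ?_⟩
  · exact dom_delete G D₁ hd1 (Or.inl ha) (Or.inl hb)
  · exact dom_delete G D₂ hd2 (Or.inr (Or.inl (Set.disjoint_left.1 hdisj hb)))
      (Or.inr (Or.inl (Set.disjoint_left.1 hdisj ha)))

/-- Every vertex belongs to one of the two sets of a pair in a minimal graph. -/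
private lemma no_outside {G : SimpleGraph V}
    (hmin : ∀ H : SimpleGraph V, H < G → ¬ KLDominated H 2 2)
    {D₁ D₂ : Set V} (hp : KLPair G 2 2 D₁ D₂)
    {x : V} (hx1 : x ∉ D₁) (hx2 : x ∉ D₂) : False := by
  obtain ⟨hdisj, hne1, hne2, hd1, hd2⟩ := hp
  obtain ⟨a, haN, haD⟩ : (G.neighborSet x ∩ D₁).Nonempty := by
    have := hd1 x hx1
    exact Set.nonempty_of_ncard_ne_zero (by omega)
  obtain ⟨y, hyD⟩ : D₂.Nonempty := by
    obtain ⟨y, -, hy⟩ : (G.neighborSet x ∩ D₂).Nonempty := by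
      have := hd2 x hx2
      exact Set.nonempty_of_ncard_ne_zero (by omega)
    exact ⟨y, hy⟩
  have hax : G.Adj a x := (haN : G.Adj x a).symm
  refine hmin (G.deleteEdges {s(a,x)}) (delete_lt hax) ⟨D₁ ∪ {x}, D₂, ?_, ?_, hne2, ?_, ?_⟩
  · rw [Set.disjoint_union_left]
    exact ⟨hdisj, by simpa using hx2⟩
  · intro h
    have hy : y ∈ D₁ ∪ {x} := h ▸ Set.mem_univ y
    rcases hy with hy | hy
    · exact Set.disjoint_left.1 hdisj hy hyD
    · exact hx2 (Set.mem_singleton_iff.1 hy ▸ hyD)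
  · intro w hw
    have hw1 : w ∉ D₁ := fun h => hw (Or.inl h)
    have hwx : w ≠ x := fun h => hw (Or.inr (by simp [h]))
    have hwa : w ≠ a := fun h => hw1 (h ▸ haD)
    rw [nbr_delete_eq G w hwa hwx]
    calc 2 ≤ (G.neighborSet w ∩ D₁).ncard := hd1 w hw1
      _ ≤ (G.neighborSet w ∩ (D₁ ∪ {x})).ncard :=
        Set.ncard_le_ncard (Set.inter_subset_inter_right _ Set.subset_union_left)
          (Set.toFinite _)
  · exact dom_delete G D₂ hd2 (Or.inr (Or.inl hx2))
      (Or.inr (Or.inl (Set.disjoint_left.1 hdisj haD)))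

/-- Main case: an edge from `D₁` to `D₂` between two vertices of degree `≥ 3`
is impossible in a minimal graph. -/
private lemma main_case {G : SimpleGraph V}
    (hmin : ∀ H : SimpleGraph V, H < G → ¬ KLDominated H 2 2)
    {D₁ D₂ : Set V} (hp : KLPair G 2 2 D₁ D₂)
    {u v : V} (huv : G.Adj u v) (hu : u ∈ D₁) (hv : v ∈ D₂)
    (hu3 : 3 ≤ deg G u) (hv3 : 3 ≤ deg G v) : False := by
  have hpswap : KLPair G 2 2 D₂ D₁ :=
    ⟨hp.1.symm, hp.2.2.1, hp.2.1, hp.2.2.2.2, hp.2.2.2.1⟩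
  have hNu : G.neighborSet u ⊆ D₂ := by
    intro y hy
    by_contra hy2
    by_cases hy1 : y ∈ D₁
    · exact no_edge_first hmin hp (hy : G.Adj u y) hu hy1
    · exact no_outside hmin hp hy1 hy2
  have hNv : G.neighborSet v ⊆ D₁ := by
    intro y hy
    by_contra hy1
    by_cases hy2 : y ∈ D₂
    · exact no_edge_first hmin hpswap (hy : G.Adj v y) hv hy2
    · exact no_outside hmin hp hy1 hy2
  have h3u : 3 ≤ (G.neighborSet u ∩ D₂).ncard := by
    rw [Set.inter_eq_self_of_subset_left hNu]; exact hu3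
  have h3v : 3 ≤ (G.neighborSet v ∩ D₁).ncard := by
    rw [Set.inter_eq_self_of_subset_left hNv]; exact hv3
  obtain ⟨hdisj, hne1, hne2, hd1, hd2⟩ := hp
  refine hmin (G.deleteEdges {s(u,v)}) (delete_lt huv) ⟨D₁, D₂, hdisj, hne1, hne2, ?_, ?_⟩
  · exact dom_delete G D₁ hd1 (Or.inl hu) (Or.inr (Or.inr h3v))
  · exact dom_delete G D₂ hd2 (Or.inr (Or.inr h3u)) (Or.inl hv)

end Aux

/-- In a connected minimal (2,2)-dominated graph, no two vertices of degree at least 3 are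
adjacent. -/
theorem stmt_9 {V : Type*} [Fintype V] (G : SimpleGraph V) (h : Minimal22 G) :
    ∀ u v : V, G.Adj u v → ¬ (3 ≤ deg G u ∧ 3 ≤ deg G v) := by
  obtain ⟨-, ⟨D₁, D₂, hp⟩, hmin⟩ := h
  rintro u v huv ⟨hu3, hv3⟩
  have hpswap : KLPair G 2 2 D₂ D₁ :=
    ⟨hp.1.symm, hp.2.2.1, hp.2.1, hp.2.2.2.2, hp.2.2.2.1⟩
  by_cases hu1 : u ∈ D₁
  · have hv1 : v ∉ D₁ := fun hv1 => no_edge_first hmin hp huv hu1 hv1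
    by_cases hv2 : v ∈ D₂
    · exact main_case hmin hp huv hu1 hv2 hu3 hv3
    · exact no_outside hmin hp hv1 hv2
  · by_cases hu2 : u ∈ D₂
    · have hv2 : v ∉ D₂ := fun hv2 => no_edge_first hmin hpswap huv hu2 hv2
      by_cases hv1 : v ∈ D₁
      · exact main_case hmin hpswap huv hu2 hv1 hu3 hv3
      · exact no_outside hmin hp hv1 hv2
    · exact no_outside hmin hp hu1 hu2
end

section
/- Let G be a connected finite simple graph with minimum degree at least 2 that is bipartite with partite sets A and B, such that every vertex of B has degree exactly 2 in G. Then G is a minimal (2,2)-dominated graph. -/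
/-- A connected bipartite graph with minimum degree at least 2 in which all vertices of one
partite set have degree exactly 2 is a minimal (2,2)-dominated graph. -/
theorem stmt_11 {V : Type*} [Fintype V] (G : SimpleGraph V) (hconn : G.Connected)
    (hδ : ∀ v : V, 2 ≤ deg G v) (A B : Set V) (hbip : BipartiteWith G A B)
    (hB : ∀ b ∈ B, deg G b = 2) : Minimal22 G := by
  obtain ⟨hUnion, hInter, hAdj⟩ := hbip
  have hdisj : Disjoint A B := Set.disjoint_iff_inter_eq_empty.mpr hInter
  have hmemB : ∀ v, v ∉ A → v ∈ B := by
    intro v hv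
    have h2 : v ∈ A ∪ B := hUnion ▸ Set.mem_univ v
    exact h2.resolve_left hv
  have hmemA : ∀ v, v ∉ B → v ∈ A := by
    intro v hv
    have h2 : v ∈ A ∪ B := hUnion ▸ Set.mem_univ v
    exact h2.resolve_right hv
  -- find a vertex in each part
  have hV : Nonempty V := hconn.nonempty
  obtain ⟨v⟩ := hV
  have hvne : (G.neighborSet v).Nonempty := by
    rw [Set.nonempty_iff_ne_empty]
    intro h
    have := hδ v
    simp [deg, h] at this
  obtain ⟨u, hu⟩ := hvne
  have hadj : G.Adj v u := hu
  have hABne : (∃ a, a ∈ A) ∧ (∃ b, b ∈ B) := by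
    rcases hAdj hadj with ⟨h1, h2⟩ | ⟨h1, h2⟩
    · exact ⟨⟨v, h1⟩, ⟨u, h2⟩⟩
    · exact ⟨⟨u, h2⟩, ⟨v, h1⟩⟩
  obtain ⟨⟨a, ha⟩, ⟨b, hb⟩⟩ := hABne
  have hAuniv : A ≠ Set.univ := by
    intro h
    have : b ∈ A ∩ B := ⟨h ▸ Set.mem_univ b, hb⟩
    rw [hInter] at this; exact this
  have hBuniv : B ≠ Set.univ := by
    intro h
    have : a ∈ A ∩ B := ⟨ha, h ▸ Set.mem_univ a⟩
    rw [hInter] at this; exact this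
  have hdomA : KDomSet G 2 A := by
    intro w hw
    have hwB : w ∈ B := hmemB w hw
    have hsub : G.neighborSet w ⊆ A := by
      intro x hx
      rcases hAdj (hx : G.Adj w x) with ⟨h1, _⟩ | ⟨_, h2⟩
      · exact absurd h1 hw
      · exact h2
    rw [Set.inter_eq_self_of_subset_left hsub]
    exact le_of_eq (hB w hwB).symm
  have hdomB : KDomSet G 2 B := by
    intro w hw
    have hsub : G.neighborSet w ⊆ B := by
      intro x hx
      rcases hAdj (hx : G.Adj w x) with ⟨_, h2⟩ | ⟨h1, _⟩
      · exact h2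
      · exact absurd h1 hw
    rw [Set.inter_eq_self_of_subset_left hsub]
    exact hδ w
  refine ⟨hconn, ⟨A, B, hdisj, hAuniv, hBuniv, hdomA, hdomB⟩, ?_⟩
  -- minimality
  intro H hH ⟨D₁, D₂, hD, hD₁, hD₂, hdom₁, hdom₂⟩
  obtain ⟨hle, hnle⟩ := lt_iff_le_not_ge.mp hH
  -- find a missing edge
  have hmiss : ∃ x y, G.Adj x y ∧ ¬ H.Adj x y := by
    by_contra h
    push_neg at h
    exact hnle fun x y hxy => h x y hxy
  obtain ⟨x, y, hxy, hnxy⟩ := hmiss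
  -- one endpoint of the missing edge is in B
  have key : ∃ c d, c ∈ B ∧ G.Adj c d ∧ ¬ H.Adj c d := by
    rcases hAdj hxy with ⟨_, h2⟩ | ⟨h1, _⟩
    · exact ⟨y, x, h2, hxy.symm, fun h => hnxy h.symm⟩
    · exact ⟨x, y, h1, hxy, hnxy⟩
  obtain ⟨c, d, hcB, hcd, hncd⟩ := key
  -- degree of c in H is < 2
  have hsub : H.neighborSet c ⊂ G.neighborSet c := by
    constructor
    · intro z hz
      exact hle hz
    · intro h
      exact hncd (h hcd)
  have hlt : (H.neighborSet c).ncard < (G.neighborSet c).ncard :=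
    Set.ncard_lt_ncard hsub (Set.toFinite _)
  have hlt2 : (H.neighborSet c).ncard < 2 := by
    have := hB c hcB
    unfold deg at this
    omega
  -- but degree of c in H is ≥ 2 by the (2,2)-pair
  have hge : 2 ≤ (H.neighborSet c).ncard := by
    by_cases hc : c ∈ D₁
    · have hc2 : c ∉ D₂ := fun h => (Set.disjoint_left.mp hD hc) h
      calc 2 ≤ (H.neighborSet c ∩ D₂).ncard := hdom₂ c hc2
        _ ≤ (H.neighborSet c).ncard :=
          Set.ncard_le_ncard Set.inter_subset_left (Set.toFinite _)
    · calc 2 ≤ (H.neighborSet c ∩ D₁).ncard := hdom₁ c hc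
        _ ≤ (H.neighborSet c).ncard :=
          Set.ncard_le_ncard Set.inter_subset_left (Set.toFinite _)
  omega
end

section
/- For every integer n ≥ 3, the cycle C_n on n vertices is a (2,2)-dominated graph if and only if n is even. -/
open SimpleGraph

/-! In a graph of maximum degree at most `k`, a vertex outside a `k`-dominating set has all its
neighbours inside it. So if `(D₁, D₂)` is a `(k, k)`-pair, every neighbour of a vertex outside `D₁`
lies in `D₁`, and every neighbour of a vertex of `D₁ ⊆ D₂ᶜ` lies in `D₂ ⊆ D₁ᶜ`: the partition
`D₁, D₁ᶜ` is a bipartition. Conversely, if all degrees are at least `k ≥ 1`, the two sides of a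
bipartition form a `(k, k)`-pair. Hence a `k`-regular graph is `(k, k)`-dominated iff it is
bipartite, and the cycle `C_n` is bipartite iff `n` is even. -/

variable {V : Type*} {G : SimpleGraph V} {k : ℕ}

lemma SimpleGraph.IsBipartite.exists_isBipartiteWith_compl (hG : G.IsBipartite) :
    ∃ s : Set V, G.IsBipartiteWith s sᶜ := by
  obtain ⟨c⟩ := hG
  refine ⟨{v | c v = 0}, disjoint_compl_right, fun u v huv => ?_⟩
  have hne := c.valid huv
  simp only [Set.mem_compl_iff, Set.mem_ofPred_eq]
  lia

variable [Fintype V]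

lemma deg_eq_degree [DecidableRel G.Adj] (v : V) : deg G v = G.degree v := by
  rw [deg, ← card_neighborSet_eq_degree, Set.ncard_eq_toFinset_card', Set.toFinset_card]

lemma KDomSet.neighborSet_subset {D : Set V} (hD : KDomSet G k D) {v : V} (hv : v ∉ D)
    (hdeg : deg G v ≤ k) : G.neighborSet v ⊆ D := by
  have hcard : (G.neighborSet v).ncard ≤ (G.neighborSet v ∩ D).ncard := hdeg.trans (hD v hv)
  rw [← Set.eq_of_subset_of_ncard_le Set.inter_subset_left hcard]
  exact Set.inter_subset_right

lemma KLPair.isBipartiteWith_compl {D₁ D₂ : Set V} (hP : KLPair G k k D₁ D₂)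
    (hdeg : ∀ v, deg G v ≤ k) : G.IsBipartiteWith D₁ D₁ᶜ := by
  obtain ⟨hdisj, -, -, hD₁, hD₂⟩ := hP
  refine ⟨disjoint_compl_right, fun u v huv => ?_⟩
  by_cases hu : u ∈ D₁
  · have hv : v ∈ D₂ := hD₂.neighborSet_subset (hdisj.notMem_of_mem_left hu) (hdeg u) huv
    exact .inl ⟨hu, hdisj.notMem_of_mem_right hv⟩
  · exact .inr ⟨hu, hD₁.neighborSet_subset hu (hdeg u) huv⟩

lemma SimpleGraph.IsBipartiteWith.kDomSet {s : Set V} (h : G.IsBipartiteWith sᶜ s)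
    (hdeg : ∀ v, k ≤ deg G v) : KDomSet G k s := by
  intro v hv
  rw [Set.inter_eq_left.mpr (isBipartiteWith_neighborSet_subset h hv)]
  exact hdeg v

lemma kLPair_of_isBipartiteWith_compl {s : Set V} (h : G.IsBipartiteWith s sᶜ)
    (hs : s.Nonempty) (hsc : sᶜ.Nonempty) (hdeg : ∀ v, k ≤ deg G v) : KLPair G k k s sᶜ := by
  refine ⟨disjoint_compl_right, ?_, ?_, h.symm.kDomSet hdeg,
    IsBipartiteWith.kDomSet (by rwa [compl_compl]) hdeg⟩
  · exact fun hu => hsc.ne_empty (by rw [hu, Set.compl_univ])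
  · exact fun hu => hs.ne_empty (by rw [← compl_compl s, hu, Set.compl_univ])

theorem kLDominated_iff_isBipartite [Nonempty V] (hk : 0 < k) (hG : ∀ v, deg G v = k) :
    KLDominated G k k ↔ G.IsBipartite := by
  constructor
  · rintro ⟨D₁, D₂, hP⟩
    exact (hP.isBipartiteWith_compl fun v => (hG v).le).isBipartite
  · intro hbip
    obtain ⟨s, hs⟩ := IsBipartite.exists_isBipartiteWith_compl hbip
    obtain ⟨u⟩ := ‹Nonempty V›
    obtain ⟨v, huv⟩ : (G.neighborSet u).Nonempty :=
      Set.nonempty_of_ncard_ne_zero (by rw [← deg, hG u]; exact hk.ne')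
    have hsides : s.Nonempty ∧ sᶜ.Nonempty := by
      rcases hs.mem_of_adj huv with ⟨hu, hv⟩ | ⟨hu, hv⟩
      · exact ⟨⟨u, hu⟩, ⟨v, hv⟩⟩
      · exact ⟨⟨v, hv⟩, ⟨u, hu⟩⟩
    exact ⟨s, sᶜ, kLPair_of_isBipartiteWith_compl hs hsides.1 hsides.2 fun v => (hG v).ge⟩

lemma Fin.even_val_add_one_iff {n : ℕ} [NeZero n] (hn : Even n) (v : Fin n) :
    Even (v + 1).val ↔ ¬Even v.val := by
  have hmod := Nat.mod_mod_of_dvd (v.val + 1) hn.two_dvd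
  rw [Fin.val_add, Fin.val_one', Nat.add_mod_mod, Nat.even_iff, Nat.even_iff]
  omega

theorem SimpleGraph.cycleGraph_isBipartite_iff (n : ℕ) :
    (cycleGraph (n + 3)).IsBipartite ↔ Even (n + 3) := by
  constructor
  · intro h
    simpa using two_colorable_iff_forall_loop_even.mp h 0 (cycleGraph.cycle n)
  · intro hn
    refine IsBipartiteWith.isBipartite (s := {v | Even v.val}) (t := {v | Even v.val}ᶜ)
      ⟨disjoint_compl_right, fun u v huv => ?_⟩
    simp only [Set.mem_compl_iff, Set.mem_ofPred_eq]
    rcases cycleGraph_adj.mp huv with h | h <;> rw [sub_eq_iff_eq_add'] at h <;> subst h <;>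
      rw [Fin.even_val_add_one_iff hn] <;> tauto

lemma SimpleGraph.deg_cycleGraph (n : ℕ) (v : Fin (n + 3)) : deg (cycleGraph (n + 3)) v = 2 := by
  rw [deg_eq_degree, cycleGraph_degree_three_le]

/-- For `n ≥ 3`, the cycle `C_n` is (2,2)-dominated if and only if `n` is even. -/
theorem stmt_17 (n : ℕ) (hn : 3 ≤ n) :
    KLDominated (SimpleGraph.cycleGraph n) 2 2 ↔ Even n := by
  obtain ⟨m, rfl⟩ : ∃ m, n = m + 3 := ⟨n - 3, by omega⟩
  rw [kLDominated_iff_isBipartite two_pos (deg_cycleGraph m), cycleGraph_isBipartite_iff]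
end

section
/- For every odd integer n ≥ 3, the cycle C_n on n vertices is a (1,2)-dominated graph. -/
lemma mod_sub_helper (a n : ℕ) (h1 : n ≤ a) (h2 : a < 2 * n) : a % n = a - n := by
  rw [Nat.mod_eq_sub_mod h1, Nat.mod_eq_of_lt (by omega)]

/-- For every odd `n ≥ 3`, the cycle `C_n` is (1,2)-dominated. -/
theorem stmt_18 (n : ℕ) (hn : 3 ≤ n) (hodd : Odd n) :
    KLDominated (SimpleGraph.cycleGraph n) 1 2 := by
  obtain ⟨m, rfl⟩ : ∃ m, n = m + 2 := ⟨n - 2, by omega⟩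
  have hm : m % 2 = 1 := by obtain ⟨k, hk⟩ := hodd; omega
  have hadd : ∀ v : Fin (m + 2), (v + 1).val = (v.val + 1) % (m + 2) := by
    intro v; rw [Fin.val_add, Fin.val_one]
  have hsub : ∀ v : Fin (m + 2), (v - 1).val = (v.val + (m + 1)) % (m + 2) := by
    intro v; rw [Fin.sub_def]; simp [Nat.add_comm]
  refine ⟨{v | v.val % 2 = 1}, {v | v.val % 2 = 0}, ?_, ?_, ?_, ?_, ?_⟩
  · rw [Set.disjoint_left]
    intro v h1 h2
    simp only [Set.mem_setOf_eq] at h1 h2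
    omega
  · intro h
    have := Set.eq_univ_iff_forall.mp h (⟨0, by omega⟩ : Fin (m + 2))
    simp at this
  · intro h
    have := Set.eq_univ_iff_forall.mp h (⟨1, by omega⟩ : Fin (m + 2))
    simp at this
  · intro v hv
    simp only [Set.mem_setOf_eq] at hv
    rw [SimpleGraph.cycleGraph_neighborSet]
    show 0 < _
    rw [Set.ncard_pos (Set.toFinite _)]
    by_cases h : v.val = m + 1
    · refine ⟨v - 1, Or.inl rfl, ?_⟩
      simp only [Set.mem_setOf_eq]
      rw [hsub, h, mod_sub_helper (m + 1 + (m + 1)) (m + 2) (by omega) (by omega)]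
      omega
    · refine ⟨v + 1, Or.inr rfl, ?_⟩
      simp only [Set.mem_setOf_eq]
      have hlt : v.val < m + 1 := by have := v.isLt; omega
      rw [hadd, Nat.mod_eq_of_lt (show v.val + 1 < m + 2 by omega)]
      omega
  · intro v hv
    simp only [Set.mem_setOf_eq] at hv
    have hv1 : v.val % 2 = 1 := by omega
    have hle : v.val ≤ m := by
      have := v.isLt; by_contra h; have : v.val = m + 1 := by omega
      omega
    have h1 : (v - 1).val = v.val - 1 := by
      rw [hsub, mod_sub_helper (v.val + (m + 1)) (m + 2) (by omega) (by omega)]; omega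
    have h2 : (v + 1).val = v.val + 1 := by
      rw [hadd, Nat.mod_eq_of_lt (show v.val + 1 < m + 2 by omega)]
    have hne : v - 1 ≠ v + 1 := by
      intro h; rw [Fin.ext_iff, h1, h2] at h; omega
    rw [SimpleGraph.cycleGraph_neighborSet]
    have hss : ({v - 1, v + 1} : Set (Fin (m + 2))) ⊆
        ({v - 1, v + 1} : Set (Fin (m + 2))) ∩ {w | w.val % 2 = 0} := by
      intro w hw
      refine ⟨hw, ?_⟩
      rcases hw with h | h <;> subst h <;> simp only [Set.mem_setOf_eq] <;>
        [rw [h1]; rw [h2]] <;> omega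
    calc 2 = ({v - 1, v + 1} : Set (Fin (m + 2))).ncard := (Set.ncard_pair hne).symm
      _ ≤ _ := Set.ncard_le_ncard hss (Set.toFinite _)
end
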